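/- Knight's identity: for any real numbers u and v and any τ ∈ (0,1), ρ_τ(u - v) - ρ_τ(u) = -v·ψ_τ(u) + ∫₀^v (1{u ≤ s} - 1{u ≤ 0}) ds, where ρ_τ(u) = u(τ - 1{u ≤ 0}) and ψ_τ(u) = τ - 1{u ≤ 0}. -/

import Mathlib

open MeasureTheory intervalIntegral

/-- Check function ρ_τ(u) = u(τ - 1{u ≤ 0}). -/
noncomputable def rho (τ u : ℝ) : ℝ := u * (τ - if u ≤ 0 then 1 else 0)

/-- ψ_τ(u) = τ - 1{u ≤ 0}. -/
noncomputable def psi (τ u : ℝ) : ℝ := τ - if u ≤ 0 then 1 else 0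

/-! The step function `s ↦ 1{u ≤ s}` is the right derivative of `s ↦ max s u` at every point, so the
integral in Knight's identity is a difference of values of `max · u`; what remains is the
piecewise-linear identity `ρ_τ(w) = τ w - min w 0`. -/

lemma rho_eq_mul_sub_min (τ w : ℝ) : rho τ w = τ * w - min w 0 := by
  unfold rho
  split_ifs with hw
  · rw [min_eq_left hw]; ring
  · rw [min_eq_right (not_le.mp hw).le]; ring

lemma monotone_ite_le (u : ℝ) : Monotone fun s : ℝ => if u ≤ s then (1 : ℝ) else 0 := by
  intro a b hab
  dsimp only
  split_ifs with ha hb <;> first | exact absurd (ha.trans hab) hb | norm_num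

lemma hasDerivWithinAt_max_const_Ioi (u s : ℝ) :
    HasDerivWithinAt (fun t => max t u) (if u ≤ s then 1 else 0) (Set.Ioi s) s := by
  split_ifs with hus
  · exact (hasDerivWithinAt_id s _).congr
      (fun t (ht : s < t) => max_eq_left (hus.trans ht.le)) (max_eq_left hus)
  · have hsu : s < u := not_le.mp hus
    refine (hasDerivWithinAt_const s _ u).congr_of_eventuallyEq ?_ (max_eq_right hsu.le)
    filter_upwards [nhdsWithin_le_nhds (Iio_mem_nhds hsu)] with t (ht : t < u)
    exact max_eq_right ht.le

lemma integral_ite_le (u a b : ℝ) :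
    ∫ s in a..b, (if u ≤ s then (1 : ℝ) else 0) = max b u - max a u :=
  integral_eq_sub_of_hasDeriv_right (by fun_prop)
    (fun s _ => hasDerivWithinAt_max_const_Ioi u s) (monotone_ite_le u).intervalIntegrable

theorem knight_identity_general (τ : ℝ) (u v : ℝ) :
    rho τ (u - v) - rho τ u =
      -v * psi τ u +
        ∫ s in (0:ℝ)..v, ((if u ≤ s then (1:ℝ) else 0) - (if u ≤ 0 then (1:ℝ) else 0)) := by
  rw [integral_sub (monotone_ite_le u).intervalIntegrable intervalIntegrable_const,
    integral_ite_le, intervalIntegral.integral_const, smul_eq_mul, sub_zero, rho_eq_mul_sub_min,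
    rho_eq_mul_sub_min, psi]
  simp only [max_def, min_def]
  split_ifs <;> linarith

/-- Knight's identity. -/
theorem knight_identity (τ : ℝ) (hτ : τ ∈ Set.Ioo (0:ℝ) 1) (u v : ℝ) :
    rho τ (u - v) - rho τ u =
      -v * psi τ u +
        ∫ s in (0:ℝ)..v, ((if u ≤ s then (1:ℝ) else 0) - (if u ≤ 0 then (1:ℝ) else 0)) :=
  knight_identity_general τ u v
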